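/- Let (J^n) be a sequence of closed convex subsets of ℝ^d with Kuratowski limit J (also closed convex), and let Q be a d×d real matrix such that ker(Q) ⊆ J^n for all n and ker(Q) ⊆ J. Then the image sets satisfy Q·J = Lim_{n→∞} Q·J^n (Kuratowski limit). -/

import Mathlib

/-! A `K`-Lipschitz map sending each `C n` into `D n` sends Kuratowski lower (upper) limit points
of `C` to those of `D`, since `infEDist (g x) (D n) ≤ K * infEDist x (C n)`. Applied to `Q` this
gives `Q·J ⊆ Liminf Q·J^n`. Conversely, take a generalized inverse `P` with `Q P Q = Q`: since
`P Q x - x ∈ ker Q` and a closed convex set containing `ker Q` is invariant under translation by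
`ker Q`, `P` maps `Q·J^n` into `J^n`. A point `y ∈ Limsup Q·J^n` lies in the closed range of `Q`,
so `y = Q (P y)` with `P y ∈ Limsup J^n = J`. -/

open Filter Topology

noncomputable section

/-- Kuratowski lower limit: points whose distance to `J n` tends to zero. -/
def kurLiminf {d : ℕ} (J : ℕ → Set (EuclideanSpace ℝ (Fin d))) :
    Set (EuclideanSpace ℝ (Fin d)) :=
  {x | Tendsto (fun n => EMetric.infEdist x (J n)) atTop (𝓝 0)}

/-- Kuratowski upper limit: points whose distance to `J n` has liminf zero. -/
def kurLimsup {d : ℕ} (J : ℕ → Set (EuclideanSpace ℝ (Fin d))) :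
    Set (EuclideanSpace ℝ (Fin d)) :=
  {x | Filter.liminf (fun n => EMetric.infEdist x (J n)) atTop = 0}

open Metric Set ENNReal NNReal

-- `hK` rules out `0 * ⊤ = 0` when `s` is empty.
theorem LipschitzWith.infEDist_le_mul_of_mapsTo {α β : Type*} [PseudoEMetricSpace α]
    [PseudoEMetricSpace β] {g : α → β} {K : ℝ≥0} (hg : LipschitzWith K g) (hK : K ≠ 0)
    {s : Set α} {t : Set β} (hst : MapsTo g s t) (x : α) :
    infEDist (g x) t ≤ K * infEDist x s := by
  calc infEDist (g x) t ≤ ⨅ y ∈ s, K * edist x y :=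
        le_iInf₂ fun y hy => (infEDist_le_edist_of_mem (hst hy)).trans (hg.edist_le_mul x y)
    _ = K * infEDist x s := by
        simp only [infEDist, ENNReal.mul_iInf_of_ne (coe_ne_zero.2 hK) coe_ne_top]

theorem Convex.add_mem_of_forall_smul_mem {E : Type*} [AddCommGroup E] [Module ℝ E]
    [TopologicalSpace E] [IsTopologicalAddGroup E] [ContinuousSMul ℝ E] {C : Set E}
    (hC : Convex ℝ C) (hCc : IsClosed C) {x u : E} (hx : x ∈ C)
    (hu : ∀ t : ℝ, 0 < t → t • u ∈ C) : x + u ∈ C := by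
  have hmem : ∀ᶠ t in 𝓝[>] (0 : ℝ), (1 - t) • x + u ∈ C := by
    filter_upwards [Ioo_mem_nhdsGT zero_lt_one] with t ⟨ht0, ht1⟩
    have := hC hx (hu t⁻¹ (inv_pos.2 ht0)) (sub_nonneg.2 ht1.le) ht0.le (sub_add_cancel 1 t)
    rwa [smul_smul, mul_inv_cancel₀ ht0.ne', one_smul] at this
  have hlim : Tendsto (fun t : ℝ => (1 - t) • x + u) (𝓝[>] 0) (𝓝 (x + u)) := by
    have : Continuous fun t : ℝ => (1 - t) • x + u := by fun_prop
    simpa using this.continuousWithinAt.tendsto (x := 0) (s := Ioi 0)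
  exact hCc.mem_of_tendsto hlim hmem

theorem LinearMap.exists_comp_comp_eq_self {K V W : Type*} [DivisionRing K] [AddCommGroup V]
    [Module K V] [AddCommGroup W] [Module K W] (f : V →ₗ[K] W) :
    ∃ g : W →ₗ[K] V, f ∘ₗ g ∘ₗ f = f := by
  obtain ⟨h, hh⟩ := f.rangeRestrict.exists_rightInverse_of_surjective f.range_rangeRestrict
  obtain ⟨g, hg⟩ := LinearMap.exists_extend h
  refine ⟨g, LinearMap.ext fun x => ?_⟩
  have hgx : g (f x) = h (f.rangeRestrict x) := congr($hg (f.rangeRestrict x))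
  simpa [hgx] using congr(($hh (f.rangeRestrict x) : W))

section Kuratowski

variable {d : ℕ} {C D : ℕ → Set (EuclideanSpace ℝ (Fin d))}

theorem LipschitzWith.mem_kurLiminf_of_mapsTo
    {g : EuclideanSpace ℝ (Fin d) → EuclideanSpace ℝ (Fin d)} {K : ℝ≥0}
    (hg : LipschitzWith K g) (hCD : ∀ n, MapsTo g (C n) (D n)) {x : EuclideanSpace ℝ (Fin d)}
    (hx : x ∈ kurLiminf C) : g x ∈ kurLiminf D := by
  have hbound n := (hg.weaken (le_add_right le_rfl : K ≤ K + 1)).infEDist_le_mul_of_mapsTo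
    (add_ne_zero.2 (Or.inr one_ne_zero)) (hCD n) x
  have hx' : Tendsto (fun n => infEDist x (C n)) atTop (𝓝 0) := hx
  refine tendsto_of_tendsto_of_tendsto_of_le_of_le tendsto_const_nhds ?_ (fun _ => zero_le) hbound
  simpa using ENNReal.Tendsto.const_mul hx' (Or.inr (coe_ne_top (r := K + 1)))

theorem LipschitzWith.mem_kurLimsup_of_mapsTo
    {g : EuclideanSpace ℝ (Fin d) → EuclideanSpace ℝ (Fin d)} {K : ℝ≥0}
    (hg : LipschitzWith K g) (hCD : ∀ n, MapsTo g (C n) (D n)) {x : EuclideanSpace ℝ (Fin d)}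
    (hx : x ∈ kurLimsup C) : g x ∈ kurLimsup D := by
  have hbound n := (hg.weaken (le_add_right le_rfl : K ≤ K + 1)).infEDist_le_mul_of_mapsTo
    (add_ne_zero.2 (Or.inr one_ne_zero)) (hCD n) x
  have hx' : liminf (fun n => infEDist x (C n)) atTop = 0 := hx
  refine le_antisymm ?_ zero_le
  calc liminf (fun n => infEDist (g x) (D n)) atTop
      ≤ liminf (fun n => ((K + 1 : ℝ≥0) : ℝ≥0∞) * infEDist x (C n)) atTop :=
        liminf_le_liminf (Eventually.of_forall hbound)
    _ = 0 := by rw [ENNReal.liminf_const_mul_of_ne_top coe_ne_top, hx', mul_zero]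

theorem kurLiminf_subset_kurLimsup : kurLiminf C ⊆ kurLimsup C :=
  fun _ hx => Tendsto.liminf_eq hx

theorem LinearMap.mem_image_kurLimsup_of_mem_kurLimsup_image
    (f : EuclideanSpace ℝ (Fin d) →ₗ[ℝ] EuclideanSpace ℝ (Fin d))
    (hC : ∀ n, ∀ x ∈ C n, ∀ u ∈ LinearMap.ker f, x + u ∈ C n) {y : EuclideanSpace ℝ (Fin d)}
    (hy : y ∈ kurLimsup fun n => f '' C n) : y ∈ f '' kurLimsup C := by
  obtain ⟨g, hg⟩ := f.exists_comp_comp_eq_self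
  have hfgf x : f (g (f x)) = f x := congr($hg x)
  have hmaps n : MapsTo g (f '' C n) (C n) := by
    rintro _ ⟨x, hx, rfl⟩
    simpa using hC n x hx (g (f x) - x) (by simp [LinearMap.mem_ker, hfgf])
  obtain ⟨x, rfl⟩ : y ∈ Set.range f := by
    have hclosed : IsClosed (Set.range f) :=
      coe_range f ▸ (LinearMap.range f).closed_of_finiteDimensional
    have hy' : liminf (fun n => infEDist y (f '' C n)) atTop = 0 := hy
    have hdist : infEDist y (Set.range f) = 0 := by
      refine le_antisymm ((le_liminf_of_le (by isBoundedDefault) ?_).trans hy'.le) zero_le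
      exact Eventually.of_forall fun n => infEDist_anti (image_subset_range f (C n))
    exact hclosed.closure_subset (mem_closure_iff_infEDist_zero.2 hdist)
  exact ⟨g (f x), (LinearMap.toContinuousLinearMap g).lipschitz.mem_kurLimsup_of_mapsTo hmaps hy,
    hfgf x⟩

end Kuratowski

theorem kuratowski_image_of_ker_subset_general {d : ℕ}
    (J : ℕ → Set (EuclideanSpace ℝ (Fin d))) (Jlim : Set (EuclideanSpace ℝ (Fin d)))
    (hJc : ∀ n, IsClosed (J n)) (hJconv : ∀ n, Convex ℝ (J n))
    (hlow : kurLiminf J = Jlim) (hup : kurLimsup J = Jlim)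
    (Q : Matrix (Fin d) (Fin d) ℝ)
    (hker : ∀ n, ∀ x : EuclideanSpace ℝ (Fin d),
      Matrix.toEuclideanLin Q x = 0 → x ∈ J n) :
    kurLiminf (fun n => Matrix.toEuclideanLin Q '' J n) =
        Matrix.toEuclideanLin Q '' Jlim ∧
      kurLimsup (fun n => Matrix.toEuclideanLin Q '' J n) =
        Matrix.toEuclideanLin Q '' Jlim := by
  set f := Matrix.toEuclideanLin Q
  have hker_add n : ∀ x ∈ J n, ∀ u ∈ LinearMap.ker f, x + u ∈ J n := fun x hx u hu =>
    (hJconv n).add_mem_of_forall_smul_mem (hJc n) hx fun t _ =>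
      hker n _ (by rw [map_smul, LinearMap.mem_ker.1 hu, smul_zero])
  have hlow_sub : f '' Jlim ⊆ kurLiminf fun n => f '' J n := by
    rintro _ ⟨x, hx, rfl⟩
    exact (LinearMap.toContinuousLinearMap f).lipschitz.mem_kurLiminf_of_mapsTo
      (fun n => mapsTo_image f (J n)) (hlow ▸ hx)
  have hup_sub : (kurLimsup fun n => f '' J n) ⊆ f '' Jlim := fun y hy =>
    hup ▸ f.mem_image_kurLimsup_of_mem_kurLimsup_image hker_add hy
  exact ⟨(kurLiminf_subset_kurLimsup.trans hup_sub).antisymm hlow_sub,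
    hup_sub.antisymm (hlow_sub.trans kurLiminf_subset_kurLimsup)⟩

/-- If the closed convex sets `J^n` Kuratowski-converge to `J` and the kernel
of the matrix `Q` is contained in every `J^n` and in `J`, then the images
`Q·J^n` Kuratowski-converge to `Q·J`. -/
theorem kuratowski_image_of_ker_subset {d : ℕ}
    (J : ℕ → Set (EuclideanSpace ℝ (Fin d))) (Jlim : Set (EuclideanSpace ℝ (Fin d)))
    (hJc : ∀ n, IsClosed (J n)) (hJconv : ∀ n, Convex ℝ (J n))
    (hc : IsClosed Jlim) (hconv : Convex ℝ Jlim)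
    (hlow : kurLiminf J = Jlim) (hup : kurLimsup J = Jlim)
    (Q : Matrix (Fin d) (Fin d) ℝ)
    (hker : ∀ n, ∀ x : EuclideanSpace ℝ (Fin d),
      Matrix.toEuclideanLin Q x = 0 → x ∈ J n)
    (hkerlim : ∀ x : EuclideanSpace ℝ (Fin d),
      Matrix.toEuclideanLin Q x = 0 → x ∈ Jlim) :
    kurLiminf (fun n => Matrix.toEuclideanLin Q '' J n) =
        Matrix.toEuclideanLin Q '' Jlim ∧
      kurLimsup (fun n => Matrix.toEuclideanLin Q '' J n) =
        Matrix.toEuclideanLin Q '' Jlim :=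
  kuratowski_image_of_ker_subset_general J Jlim hJc hJconv hlow hup Q hker
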